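/- arXiv:1510.03278 — 4 statements merged into one kernel-verified Lean document; each statement's English description precedes it below -/
import Mathlib

section
/- If every transition of a tree automaton over the state set Q' of the saturated automaton is sound with respect to the semantics ⟦·⟧, then L(p) ⊆ ⟦p⟧ for every state p ∈ Q'. -/
namespace OTPS

/-! ### Ranked ordered alphabets and trees -/

/-- Data of a ranked ordered alphabet: each symbol has a rank (arity) and an order. -/
structure SymData (α : Type) where
  rank : α → ℕ
  ord : α → ℕ

/-- Finite trees labelled by `α`. -/
inductive TTree (α : Type) : Type
  | node (a : α) (ts : List (TTree α)) : TTree α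

namespace TTree

/-- Root label of a tree. -/
def root {α : Type} : TTree α → α
  | node a _ => a

end TTree

/-- Well-formedness of a tree w.r.t. a rank function: every node labelled `a`
has exactly `rk a` children. -/
inductive WFT {α : Type} (rk : α → ℕ) : TTree α → Prop
  | node {a : α} {ts : List (TTree α)} :
      ts.length = rk a → (∀ t ∈ ts, WFT rk t) → WFT rk (.node a ts)

/-- The variable `x` occurs in a term over `α ⊕ ν` (`ν` = variables). -/
inductive OccursIn {α ν : Type} (x : ν) : TTree (α ⊕ ν) → Prop
  | here (ts : List (TTree (α ⊕ ν))) : OccursIn x (.node (.inr x) ts)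
  | child {a : α ⊕ ν} {ts : List (TTree (α ⊕ ν))} {t : TTree (α ⊕ ν)} :
      t ∈ ts → OccursIn x t → OccursIn x (.node a ts)

/-- A term that is just a variable. -/
def IsVarTerm {α ν : Type} (t : TTree (α ⊕ ν)) : Prop :=
  ∃ x : ν, t = .node (.inr x) []

/-- `u` is `r`-ground: `u` shares no variables with `r`. -/
def RGround {α ν : Type} (r u : TTree (α ⊕ ν)) : Prop :=
  ∀ x : ν, OccursIn x u → ¬ OccursIn x r

/-- A term is linear if every variable occurs at most once in it. -/
inductive Linear {α ν : Type} : TTree (α ⊕ ν) → Prop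
  | node {a : α ⊕ ν} {ts : List (TTree (α ⊕ ν))} :
      (∀ t ∈ ts, Linear t) →
      List.Pairwise (fun s t => ∀ x : ν, OccursIn x s → ¬ OccursIn x t) ts →
      Linear (.node a ts)

/-- Order of the root symbol of a term. -/
def termOrd {α ν : Type} (sd : SymData α) (ordv : ν → ℕ) : TTree (α ⊕ ν) → ℕ
  | .node (.inl a) _ => sd.ord a
  | .node (.inr x) _ => ordv x

/-- Rank function on `α ⊕ ν`: variables have rank `0`. -/
def termRank {α ν : Type} (sd : SymData α) : α ⊕ ν → ℕ
  | .inl a => sd.rank a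
  | .inr _ => 0

/-- Applying a ground substitution to a term. -/
def substG {α ν : Type} (σ : ν → TTree α) : TTree (α ⊕ ν) → TTree α
  | .node (.inl a) ts => .node a (ts.attach.map (fun t => substG σ t.1))
  | .node (.inr x) _ => σ x
decreasing_by
  have h1 : sizeOf t.1 < sizeOf ts := List.sizeOf_lt_of_mem t.2
  simp only [TTree.node.sizeOf_spec]
  omega

/-! ### Alternating transition systems and backward reachability -/

/-- One step of the alternating transition relation, lifted to sets of configurations:
`Step1 tr A B` holds iff every `c ∈ A` either belongs to `B` or has a transition
`tr c D` with `D ⊆ B`. -/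
def Step1 {C : Type} (tr : C → Set C → Prop) (A B : Set C) : Prop :=
  ∀ c ∈ A, c ∈ B ∨ ∃ D : Set C, tr c D ∧ D ⊆ B

/-- Backward reachability: the set of configurations `c` with `{c} →₁* T`. -/
def preStar {C : Type} (tr : C → Set C → Prop) (T : Set C) : Set C :=
  {c | Relation.ReflTransGen (Step1 tr) {c} T}

/-! ### Alternating tree automata -/

/-- An alternating tree automaton over alphabet `α` with states `Q`:
a set of transitions `p →^a P₁ ⋯ P_m`. -/
structure ATA (α Q : Type) where
  delta : Set (Q × α × List (Set Q))

/-- Acceptance of a (ground) tree from a state. -/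
inductive ATA.Accepts {α Q : Type} (A : ATA α Q) : Q → TTree α → Prop
  | node {p : Q} {a : α} {ts : List (TTree α)} {Ps : List (Set Q)} :
      (p, a, Ps) ∈ A.delta → Ps.length = ts.length →
      (∀ (i : ℕ) (h1 : i < ts.length) (h2 : i < Ps.length),
        ∀ q ∈ Ps.get ⟨i, h2⟩, ATA.Accepts A q (ts.get ⟨i, h1⟩)) →
      ATA.Accepts A p (.node a ts)

/-- The language of configurations recognized by `A` from the set `P`. -/
def ATA.lang {α Q : Type} (A : ATA α Q) (P : Set Q) : Set (Q × TTree α) :=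
  {c | c.1 ∈ P ∧ A.Accepts c.1 c.2}

/-- A non-deterministic tree automaton: all state sets in transitions are singletons. -/
def ATA.Nondet {α Q : Type} (A : ATA α Q) : Prop :=
  ∀ d ∈ A.delta, ∀ Pi ∈ d.2.2, ∃ q : Q, Pi = {q}

/-! ### Ordered tree-pushdown systems -/

/-- A rewrite rule of an AOTPS: `p, l → tgt, rhs` where the left-hand side `l` is
`a(args)`, and `look = some k` designates the lookahead subtree (deep rule). -/
structure ARule (α ν Q : Type) where
  p : Q
  a : α
  args : List (TTree (α ⊕ ν))
  look : Option ℕ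
  tgt : Set Q
  rhs : TTree (α ⊕ ν)

/-- The left-hand side of a rule as a term. -/
def ARule.lhs {α ν Q : Type} (ru : ARule α ν Q) : TTree (α ⊕ ν) :=
  .node (.inl ru.a) ru.args

/-- A term that is `r`-ground or a variable. -/
def GroundOrVar {α ν : Type} (r u : TTree (α ⊕ ν)) : Prop :=
  RGround r u ∨ IsVarTerm u

/-- Well-formedness of an AOTPS rule: the left-hand side is linear, all variables of
the right-hand side occur in the left-hand side, the trees are well ranked, and the
left-hand side is shallow or deep, subject to the ordering condition. -/
structure ARule.WF {α ν Q : Type} (sd : SymData α) (ordv : ν → ℕ)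
    (ru : ARule α ν Q) : Prop where
  linear : Linear ru.lhs
  varsSub : ∀ x : ν, OccursIn x ru.rhs → OccursIn x ru.lhs
  lhsWF : WFT (termRank sd) ru.lhs
  rhsWF : WFT (termRank sd) ru.rhs
  shape :
    match ru.look with
    | none => ∀ u ∈ ru.args, GroundOrVar ru.rhs u
    | some k => k < ru.args.length ∧
        ∃ (b : α) (vs : List (TTree (α ⊕ ν))),
          ru.args.getD k ru.rhs = .node (.inl b) vs ∧
          (∀ v ∈ vs, GroundOrVar ru.rhs v) ∧
          (∀ i, i < ru.args.length → i ≠ k → GroundOrVar ru.rhs (ru.args.getD i ru.rhs)) ∧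
          (∀ i, i < ru.args.length → i ≠ k →
            termOrd sd ordv (ru.args.getD i ru.rhs) ≤ sd.ord b →
            RGround ru.rhs (ru.args.getD i ru.rhs))

/-- An alternating ordered tree-pushdown system (AOTPS). -/
structure AOTPS (α ν Q : Type) where
  n : ℕ
  sd : SymData α
  ordv : ν → ℕ
  ctrl : Set Q
  rules : Set (ARule α ν Q)

/-- Well-formedness of an AOTPS of order `n`. -/
structure AOTPS.WF {α ν Q : Type} (S : AOTPS α ν Q) : Prop where
  nPos : 0 < S.n
  ordBound : ∀ a : α, S.sd.ord a ≤ S.n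
  rulesWF : ∀ ru ∈ S.rules, ru.p ∈ S.ctrl ∧ ru.tgt ⊆ S.ctrl ∧ ru.WF S.sd S.ordv

/-- The alternating transition relation induced by an AOTPS on configurations
`(p, t)` by root rewriting. -/
def AOTPS.trans {α ν Q : Type} (S : AOTPS α ν Q)
    (c : Q × TTree α) (D : Set (Q × TTree α)) : Prop :=
  ∃ ru ∈ S.rules, ∃ σ : ν → TTree α,
    (∀ x : ν, OccursIn x ru.lhs → S.sd.ord (σ x).root = S.ordv x) ∧
    c = (ru.p, substG σ ru.lhs) ∧
    D = (fun q => (q, substG σ ru.rhs)) '' ru.tgt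

/-- A flat rule: every subtree of the left-hand side (and of the lookahead subtree)
is just a variable. -/
def ARule.Flat {α ν Q : Type} (ru : ARule α ν Q) : Prop :=
  match ru.look with
  | none => ∀ u ∈ ru.args, IsVarTerm u
  | some k =>
      (∀ i, i < ru.args.length → i ≠ k → IsVarTerm (ru.args.getD i ru.rhs)) ∧
      ∃ (b : α) (vs : List (TTree (α ⊕ ν))),
        ru.args.getD k ru.rhs = .node (.inl b) vs ∧ ∀ v ∈ vs, IsVarTerm v

/-- A flat AOTPS: all rules are flat. -/
def AOTPS.Flat {α ν Q : Type} (S : AOTPS α ν Q) : Prop :=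
  ∀ ru ∈ S.rules, ru.Flat

/-- A non-deterministic AOTPS: every rule's target set of control locations is a
singleton. -/
def AOTPS.Nondet {α ν Q : Type} (S : AOTPS α ν Q) : Prop :=
  ∀ ru ∈ S.rules, ∃ q : Q, ru.tgt = {q}

/-- A shallow AOTPS: no deep rules. -/
def AOTPS.Shallow {α ν Q : Type} (S : AOTPS α ν Q) : Prop :=
  ∀ ru ∈ S.rules, ru.look = none

/-- A linear AOTPS: right-hand sides of rules are linear. -/
def AOTPS.LinearSys {α ν Q : Type} (S : AOTPS α ν Q) : Prop :=
  ∀ ru ∈ S.rules, Linear ru.rhs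

end OTPS
namespace OTPS

/-! ### The saturation construction -/

/-- States of the saturated automaton: original states, states `p^v` for terms `v`,
and states `(g, P_{k+1}, …, P_m)` for deep rules `g` (the sets `P_j` are represented
by lists of states). -/
inductive SatQ (α ν Q : Type) : Type
  | base : Q → SatQ α ν Q
  | pv : TTree (α ⊕ ν) → SatQ α ν Q
  | tup : ARule α ν Q → List (List (SatQ α ν Q)) → SatQ α ν Q

/-- Transitions of automata over the saturated state space. -/
abbrev STrans (α ν Q : Type) : Type :=
  SatQ α ν Q × α × List (Set (SatQ α ν Q))

/-- The order of a saturated state. -/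
def SatQ.ord {α ν Q : Type} (sd : SymData α) (ordv : ν → ℕ) (ordQ : Q → ℕ) :
    SatQ α ν Q → ℕ
  | .base q => ordQ q
  | .pv v => termOrd sd ordv v
  | .tup ru _ =>
      match ru.look with
      | some k => termOrd sd ordv (ru.args.getD k ru.rhs)
      | none => 0

/-- The transitions `Δ₀` making `L(p^v)` the set of ground instances of `v`:
a variable of order `k` is treated as a leaf accepted by every state of order `k`
(here: by transitions with empty state sets, from every symbol of order `k`). -/
def delta0 {α ν Q : Type} (S : AOTPS α ν Q) : Set (STrans α ν Q) :=
  { d | (∃ (a : α) (vs : List (TTree (α ⊕ ν))),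
          d = (SatQ.pv (.node (.inl a) vs), a,
               vs.map (fun v => ({SatQ.pv v} : Set (SatQ α ν Q))))) ∨
        (∃ (x : ν) (a : α), S.sd.ord a = S.ordv x ∧
          d = (SatQ.pv (.node (.inr x) []), a,
               List.replicate (S.sd.rank a) (∅ : Set (SatQ α ν Q)))) }

/-- Lifting a transition of the original automaton to the saturated state space. -/
def liftTrans {α ν Q : Type} (d : Q × α × List (Set Q)) : STrans α ν Q :=
  (SatQ.base d.1, d.2.1, d.2.2.map (fun P => SatQ.base '' P))

/-- The initial transitions `Δ ∪ Δ₀` of the saturation procedure. -/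
def baseDelta {α ν Q : Type} (S : AOTPS α ν Q) (A : ATA α Q) : Set (STrans α ν Q) :=
  (liftTrans '' A.delta) ∪ delta0 S

/-- Extended transition relation for a set of states:
`P →^a P₁ ⋯ P_m` iff every `p ∈ P` has a transition `p →^a P₁^p ⋯ P_m^p`
and `P_j = ⋃_{p ∈ P} P_j^p`. -/
def ExtTrans {α σs : Type} (D : Set (σs × α × List (Set σs)))
    (P : Set σs) (a : α) (Ps : List (Set σs)) : Prop :=
  ∃ f : σs → List (Set σs),
    (∀ p ∈ P, (p, a, f p) ∈ D ∧ (f p).length = Ps.length) ∧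
    ∀ j, j < Ps.length → Ps.getD j ∅ = ⋃ p ∈ P, (f p).getD j ∅

/-- Run trees of an automaton with transition set `D` on terms possibly containing
variables: a variable of order `k` is accepted by every state of order `k`. -/
inductive IsRun {α ν σs : Type} (ords : σs → ℕ) (ordv : ν → ℕ)
    (D : Set (σs × α × List (Set σs))) :
    TTree (α ⊕ ν) → TTree (Set σs) → Prop
  | sym {a : α} {ts : List (TTree (α ⊕ ν))} {P : Set σs} {ss : List (TTree (Set σs))} :
      ss.length = ts.length →
      ExtTrans D P a (ss.map TTree.root) →
      (∀ (i : ℕ) (h1 : i < ts.length) (h2 : i < ss.length),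
        IsRun ords ordv D (ts.get ⟨i, h1⟩) (ss.get ⟨i, h2⟩)) →
      IsRun ords ordv D (.node (.inl a) ts) (.node P ss)
  | var {x : ν} {ts : List (TTree (α ⊕ ν))} {P : Set σs} :
      (∀ q ∈ P, ords q = ordv x) →
      IsRun ords ordv D (.node (.inr x) ts) (.node P [])

/-- `LabelAt r rt x P`: at some node of `r` labelled by the variable `x`,
the run tree `rt` carries the state set `P`. -/
inductive LabelAt {α ν σs : Type} :
    TTree (α ⊕ ν) → TTree (Set σs) → ν → Set σs → Prop
  | here {x : ν} {ts : List (TTree (α ⊕ ν))} {P : Set σs} {ss : List (TTree (Set σs))} :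
      LabelAt (.node (.inr x) ts) (.node P ss) x P
  | child {c : α ⊕ ν} {ts : List (TTree (α ⊕ ν))} {P0 : Set σs}
      {ss : List (TTree (Set σs))} {x : ν} {P : Set σs} {i : ℕ}
      (h1 : i < ts.length) (h2 : i < ss.length) :
      LabelAt (ts.get ⟨i, h1⟩) (ss.get ⟨i, h2⟩) x P →
      LabelAt (.node c ts) (.node P0 ss) x P

/-- `⋃ rt(r⁻¹(x))`: the union of the run-tree labels at the `x`-labelled nodes of `r`. -/
def varStates {α ν σs : Type} (r : TTree (α ⊕ ν)) (rt : TTree (Set σs)) (x : ν) :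
    Set σs :=
  {q | ∃ P, LabelAt r rt x P ∧ q ∈ P}

/-- The state set attached by the saturation procedure to a subtree `u` of a
left-hand side, given the right-hand side `rhs` and a run tree `rt` on `rhs`:
`{p^u}` if `u` is not a variable; `⋃ rt(rhs⁻¹(x))` if `u` is a variable `x`
occurring in `rhs`; `{p^x}` if `u` is a variable `x` not occurring in `rhs`. -/
inductive ArgSetAt {α ν Q : Type} (rhs : TTree (α ⊕ ν))
    (rt : TTree (Set (SatQ α ν Q))) :
    TTree (α ⊕ ν) → Set (SatQ α ν Q) → Prop
  | ground {u : TTree (α ⊕ ν)} : ¬ IsVarTerm u → ArgSetAt rhs rt u {SatQ.pv u}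
  | varIn {x : ν} : OccursIn x rhs →
      ArgSetAt rhs rt (.node (.inr x) []) (varStates rhs rt x)
  | varOut {x : ν} : ¬ OccursIn x rhs →
      ArgSetAt rhs rt (.node (.inr x) []) {SatQ.pv (.node (.inr x) [])}

/-- One saturation step: the transitions added, given the current transition set `D`:
for every rule `g = (p, l → S', r)` with `l = a(u₁,…,u_m)` and every run tree of the
current automaton from `S'` on `r`, a transition `p →^a P₁ ⋯ P_m` is added; for a deep
rule, `P_k = {(g, P_{k+1},…,P_m)}` and additionally a transition
`(g, P_{k+1},…,P_m) →^b S₁ ⋯ S_{m'}` is added. -/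
def newTrans {α ν Q : Type} (S : AOTPS α ν Q) (ordQ : Q → ℕ)
    (D : Set (STrans α ν Q)) : Set (STrans α ν Q) :=
  { d | ∃ ru ∈ S.rules, ∃ rt : TTree (Set (SatQ α ν Q)),
      IsRun (SatQ.ord S.sd S.ordv ordQ) S.ordv D ru.rhs rt ∧
      rt.root = SatQ.base '' ru.tgt ∧
      ∃ Ps : List (Set (SatQ α ν Q)),
        Ps.length = ru.args.length ∧
        (∀ i, i < ru.args.length →
          ArgSetAt ru.rhs rt (ru.args.getD i ru.rhs) (Ps.getD i ∅)) ∧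
        ((ru.look = none ∧ d = (SatQ.base ru.p, ru.a, Ps)) ∨
         (∃ k, ru.look = some k ∧ k < ru.args.length ∧
           ∃ (b : α) (vs : List (TTree (α ⊕ ν))),
             ru.args.getD k ru.rhs = .node (.inl b) vs ∧
             ∃ Ls : List (List (SatQ α ν Q)),
               Ls.length = ru.args.length - (k + 1) ∧
               (∀ j, j < Ls.length →
                 {q | q ∈ Ls.getD j []} = Ps.getD (k + 1 + j) ∅) ∧
               (d = (SatQ.base ru.p, ru.a, Ps.set k {SatQ.tup ru Ls}) ∨
                ∃ Ss : List (Set (SatQ α ν Q)),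
                  Ss.length = vs.length ∧
                  (∀ j, j < vs.length →
                    ArgSetAt ru.rhs rt (vs.getD j ru.rhs) (Ss.getD j ∅)) ∧
                  d = (SatQ.tup ru Ls, b, Ss)))) }

/-- Iteration of the saturation procedure. -/
def satIter {α ν Q : Type} (S : AOTPS α ν Q) (A : ATA α Q) (ordQ : Q → ℕ) :
    ℕ → Set (STrans α ν Q)
  | 0 => baseDelta S A
  | k + 1 => satIter S A ordQ k ∪ newTrans S ordQ (satIter S A ordQ k)

/-- The saturated automaton `B`. -/
def satATA {α ν Q : Type} (S : AOTPS α ν Q) (A : ATA α Q) (ordQ : Q → ℕ) :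
    ATA α (SatQ α ν Q) :=
  ⟨⋃ k, satIter S A ordQ k⟩

/-- The language of configurations `L(B, P)` of the saturated automaton. -/
def satLang {α ν Q : Type} (S : AOTPS α ν Q) (A : ATA α Q) (ordQ : Q → ℕ) :
    Set (Q × TTree α) :=
  { c | c.1 ∈ S.ctrl ∧ (satATA S A ordQ).Accepts (SatQ.base c.1) c.2 }

end OTPS
namespace OTPS

/-- The semantics `⟦p⟧` of states of the saturated automaton:
`⟦base q⟧ = {t | (q,t) ∈ pre*(L(A,P))}` for control locations `q ∈ P`,
`⟦base q⟧ = L_A(q)` for `q ∈ Q ∖ P`, `⟦p^v⟧ = L_B(p^v)`, and for a tuple state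
`((q, l → S', r), P_{k+1},…,P_m)` with `l = a(u₁,…,u_m)` and lookahead subtree `u_k`,
`⟦p⟧` is the set of trees `t_k ∈ ⟦p^{u_k}⟧` such that for all `t₁ ∈ ⟦p^{u₁}⟧, …,
t_{k−1} ∈ ⟦p^{u_{k−1}}⟧` and all `t_{k+1} ∈ ⟦P_{k+1}⟧, …, t_m ∈ ⟦P_m⟧` we have
`(q, a(t₁,…,t_m)) ∈ pre*(L(A,P))`. -/
def sem {α ν Q : Type} (S : AOTPS α ν Q) (A : ATA α Q) (ordQ : Q → ℕ) :
    SatQ α ν Q → Set (TTree α)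
  | .base q =>
      {t | (q ∈ S.ctrl ∧ (q, t) ∈ preStar S.trans (A.lang S.ctrl)) ∨
           (q ∉ S.ctrl ∧ A.Accepts q t)}
  | .pv v => {t | (satATA S A ordQ).Accepts (.pv v) t}
  | .tup ru Ls =>
      {t | ∃ k, ru.look = some k ∧
        (satATA S A ordQ).Accepts (.pv (ru.args.getD k ru.rhs)) t ∧
        ∀ ts : List (TTree α), ts.length = ru.args.length →
          ts.getD k t = t →
          (∀ i, i < k →
            (satATA S A ordQ).Accepts (.pv (ru.args.getD i ru.rhs)) (ts.getD i t)) →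
          (∀ j, j < Ls.length → ∀ q ∈ Ls.getD j [],
            ts.getD (k + 1 + j) t ∈ sem S A ordQ q) →
          (ru.p, TTree.node ru.a ts) ∈ preStar S.trans (A.lang S.ctrl)}
termination_by s => sizeOf s
decreasing_by
  rename_i hlen hget hacc hj hq
  have h0 : Ls.getD j [] = Ls.get ⟨j, hj⟩ := by
    simp [List.getD_eq_getElem?_getD, List.getElem?_eq_getElem, hj]
  rw [h0] at hq
  have h1 : sizeOf q < sizeOf (Ls.get ⟨j, hj⟩) :=
    List.sizeOf_lt_of_mem hq
  have h2 : sizeOf (Ls.get ⟨j, hj⟩) < sizeOf Ls :=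
    List.sizeOf_lt_of_mem (Ls.get_mem _)
  simp only [SatQ.tup.sizeOf_spec]
  omega

/-- ⟦·⟧ on a set of states: the intersection of the members' semantics. -/
def semSet {α ν Q : Type} (S : AOTPS α ν Q) (A : ATA α Q) (ordQ : Q → ℕ)
    (P : Set (SatQ α ν Q)) : Set (TTree α) :=
  ⋂ q ∈ P, sem S A ordQ q

/-- A transition `p →^a P₁ ⋯ P_m` is sound iff for all `t₁ ∈ ⟦P₁⟧, …, t_m ∈ ⟦P_m⟧`,
`a(t₁,…,t_m) ∈ ⟦p⟧`. -/
def SoundT {α ν Q : Type} (S : AOTPS α ν Q) (A : ATA α Q) (ordQ : Q → ℕ)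
    (d : STrans α ν Q) : Prop :=
  ∀ ts : List (TTree α), ts.length = d.2.2.length →
    (∀ (i : ℕ) (h1 : i < ts.length) (h2 : i < d.2.2.length),
      ∀ q ∈ d.2.2.get ⟨i, h2⟩, ts.get ⟨i, h1⟩ ∈ sem S A ordQ q) →
    TTree.node d.2.1 ts ∈ sem S A ordQ d.1

end OTPS
namespace OTPS

theorem ATA.Accepts.mem_of_closed {α Q : Type} {A : ATA α Q} {I : Q → Set (TTree α)}
    (hI : ∀ p a Ps, (p, a, Ps) ∈ A.delta → ∀ ts : List (TTree α), ts.length = Ps.length →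
      (∀ (i : ℕ) (h1 : i < ts.length) (h2 : i < Ps.length),
        ∀ q ∈ Ps.get ⟨i, h2⟩, ts.get ⟨i, h1⟩ ∈ I q) →
      TTree.node a ts ∈ I p)
    {p : Q} {t : TTree α} (h : A.Accepts p t) : t ∈ I p := by
  induction h with
  | node hd hlen _ ih => exact hI _ _ _ hd _ hlen.symm ih

theorem lang_subset_sem_of_sound_general {α ν Q : Type} (S : AOTPS α ν Q) (A : ATA α Q)
    (ordQ : Q → ℕ) (D : Set (STrans α ν Q))
    (hsound : ∀ d ∈ D, SoundT S A ordQ d) :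
    ∀ (p : SatQ α ν Q) (t : TTree α),
      (ATA.mk D).Accepts p t → t ∈ sem S A ordQ p :=
  fun _ _ h => h.mem_of_closed fun _ _ _ hd => hsound _ hd

/-- If every transition of a tree automaton over the state set `Q'`
of the saturated automaton is sound w.r.t. the semantics `⟦·⟧`, then `L(p) ⊆ ⟦p⟧`
for every state `p`. -/
theorem lang_subset_sem_of_sound {α ν Q : Type} (S : AOTPS α ν Q) (A : ATA α Q)
    (ordQ : Q → ℕ) (hS : S.WF)
    (hOrdered : ∀ d ∈ A.delta, ordQ d.1 = S.sd.ord d.2.1)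
    (hNoBack : ∀ d ∈ A.delta, ∀ Pi ∈ d.2.2, ∀ q ∈ Pi, q ∉ S.ctrl)
    (D : Set (STrans α ν Q)) (hsound : ∀ d ∈ D, SoundT S A ordQ d) :
    ∀ (p : SatQ α ν Q) (t : TTree α),
      (ATA.mk D).Accepts p t → t ∈ sem S A ordQ p :=
  lang_subset_sem_of_sound_general S A ordQ D hsound

end OTPS
end

section
/- All transitions of the initial automaton, i.e., all transitions in Δ ∪ Δ₀, are sound with respect to the semantics ⟦·⟧. -/
namespace OTPS

lemma mem_preStar_of_mem {C : Type} {tr : C → Set C → Prop} {T : Set C} {c : C}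
    (h : c ∈ T) : c ∈ preStar tr T :=
  Relation.ReflTransGen.single fun _ hc' => (Set.mem_singleton_iff.1 hc') ▸ Or.inl h

section Semantics

variable {α ν Q : Type} (S : AOTPS α ν Q) (A : ATA α Q) (ordQ : Q → ℕ)

lemma mem_sem_base_iff {q : Q} {t : TTree α} :
    t ∈ sem S A ordQ (.base q) ↔
      (q ∈ S.ctrl ∧ (q, t) ∈ preStar S.trans (A.lang S.ctrl)) ∨
        (q ∉ S.ctrl ∧ A.Accepts q t) := by
  rw [sem]
  rfl

lemma mem_sem_pv_iff {v : TTree (α ⊕ ν)} {t : TTree α} :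
    t ∈ sem S A ordQ (.pv v) ↔ (satATA S A ordQ).Accepts (.pv v) t := by
  rw [sem]
  rfl

variable {S A ordQ}

lemma mem_sem_base_of_accepts {q : Q} {t : TTree α} (h : A.Accepts q t) :
    t ∈ sem S A ordQ (.base q) := by
  rw [mem_sem_base_iff]
  by_cases hq : q ∈ S.ctrl
  · exact Or.inl ⟨hq, mem_preStar_of_mem ⟨hq, h⟩⟩
  · exact Or.inr ⟨hq, h⟩

lemma accepts_of_mem_sem_base {q : Q} {t : TTree α} (hq : q ∉ S.ctrl)
    (h : t ∈ sem S A ordQ (.base q)) : A.Accepts q t := by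
  rcases (mem_sem_base_iff S A ordQ).1 h with ⟨hq', _⟩ | ⟨_, h⟩
  · exact absurd hq' hq
  · exact h

lemma mem_satATA_delta_of_mem_delta0 {d : STrans α ν Q} (h : d ∈ delta0 S) :
    d ∈ (satATA S A ordQ).delta :=
  Set.mem_iUnion.2 ⟨0, Or.inr h⟩

/-- Since `⟦p^v⟧ = L_B(p^v)`, a transition of `B` between states of the form `p^v` is sound
simply because `B` may take it. -/
lemma soundT_of_mem_satATA_delta {v : TTree (α ⊕ ν)} {a : α} {Ps : List (Set (SatQ α ν Q))}
    (hd : (.pv v, a, Ps) ∈ (satATA S A ordQ).delta)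
    (hPs : ∀ P ∈ Ps, ∀ q ∈ P, ∃ w, q = .pv w) :
    SoundT S A ordQ (.pv v, a, Ps) := by
  intro ts hlen hmem
  rw [mem_sem_pv_iff]
  refine .node hd hlen.symm fun i h1 h2 q hq => ?_
  obtain ⟨w, rfl⟩ := hPs _ (List.get_mem _ _) q hq
  exact (mem_sem_pv_iff S A ordQ).1 (hmem i h1 h2 _ hq)

lemma delta0_sound {d : STrans α ν Q} (hd : d ∈ delta0 S) : SoundT S A ordQ d := by
  have hB := mem_satATA_delta_of_mem_delta0 (A := A) (ordQ := ordQ) hd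
  rcases hd with ⟨a, vs, rfl⟩ | ⟨x, a, -, rfl⟩
  · refine soundT_of_mem_satATA_delta hB fun P hP q hq => ?_
    obtain ⟨w, -, rfl⟩ := List.mem_map.1 hP
    exact ⟨w, hq⟩
  · refine soundT_of_mem_satATA_delta hB fun P hP q hq => ?_
    rw [List.eq_of_mem_replicate hP] at hq
    exact absurd hq (Set.notMem_empty q)

/-- The target states of a transition of `A` lie outside the control locations, where `⟦q⟧`
is just `L_A(q)`; so the lifted transition is sound because `A` may take it. -/
lemma liftTrans_sound {d : Q × α × List (Set Q)} (hd : d ∈ A.delta)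
    (hNoBack : ∀ P ∈ d.2.2, ∀ q ∈ P, q ∉ S.ctrl) :
    SoundT S A ordQ (liftTrans d) := by
  obtain ⟨p, a, Ps⟩ := d
  intro ts hlen hmem
  simp only [liftTrans, List.length_map] at hlen hmem ⊢
  refine mem_sem_base_of_accepts (.node hd hlen.symm fun i h1 h2 q hq => ?_)
  refine accepts_of_mem_sem_base (hNoBack _ (List.get_mem _ _) q hq)
    (hmem i h1 (by simpa using h2) _ ?_)
  simp only [List.get_eq_getElem, List.getElem_map]
  exact Set.mem_image_of_mem _ hq

end Semantics

theorem baseDelta_sound_general {α ν Q : Type} (S : AOTPS α ν Q) (A : ATA α Q)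
    (ordQ : Q → ℕ)
    (hNoBack : ∀ d ∈ A.delta, ∀ Pi ∈ d.2.2, ∀ q ∈ Pi, q ∉ S.ctrl) :
    ∀ d ∈ baseDelta S A, SoundT S A ordQ d := by
  rintro _ (⟨d, hd, rfl⟩ | hd0)
  · exact liftTrans_sound hd (hNoBack d hd)
  · exact delta0_sound hd0

/-- All transitions of the initial automaton, i.e. all transitions
in `Δ ∪ Δ₀`, are sound w.r.t. the semantics `⟦·⟧`. -/
theorem baseDelta_sound {α ν Q : Type} (S : AOTPS α ν Q) (A : ATA α Q)
    (ordQ : Q → ℕ) (hS : S.WF)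
    (hOrdered : ∀ d ∈ A.delta, ordQ d.1 = S.sd.ord d.2.1)
    (hNoBack : ∀ d ∈ A.delta, ∀ Pi ∈ d.2.2, ∀ q ∈ Pi, q ∉ S.ctrl) :
    ∀ d ∈ baseDelta S A, SoundT S A ordQ d :=
  baseDelta_sound_general S A ordQ hNoBack

end OTPS
end

section
/- Size of the saturated automaton: let m > 1 be the maximal rank of a symbol in Σ and let the state sets satisfy |Q'_{n+1}| ≤ |Q| + |R|, |Q'_n| ≤ |Q'_{n+1}| + |R|, and |Q'_k| ≤ |Q'_{k+1}| + |R|·2^{(m−1)·|Q'_{k+1}|} for 1 ≤ k ≤ n−1. Then the total number of states satisfies |Q'| ≤ exp_{n−1}(O((m−1)·(|Q| + |R|))) and the number of transitions satisfies |Δ'| ≤ exp_n(O((m−1)·(|Q| + |R|))), where exp_0(x) = x and exp_{i+1}(x) = 2^{exp_i(x)}. -/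
/-
Put `B = (m-1)(|Q|+|R|)` and follow the potential `p_k = 3((m-1)|Q'_k| + B)` down the
levels. At the top `p_n ≤ 9B`, and the recurrence for `|Q'_k|` gives `p_k ≤ 2^(p_{k+1})`,
because the new term `3B·2^((m-1)|Q'_{k+1}|)` is at most `2^(p_{k+1} - 1)`. Hence
`|Q'| ≤ p_1 ≤ exp_{n-1}(9B)`. The factor 3 leaves room for the transitions:
`(|Q|+|R|+|Q'|)·2^(m|Q'|) ≤ 2^(|Q|+|R|+(m+1)|Q'|) ≤ 2^(p_1)` since `m+1 ≤ 3(m-1)`.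
-/

namespace OTPS

/-- The tower function: `expIter 0 x = x` and `expIter (i+1) x = 2 ^ expIter i x`. -/
def expIter : ℕ → ℕ → ℕ
  | 0, x => x
  | i + 1, x => 2 ^ expIter i x

theorem le_expIter_of_le_two_pow {p : ℕ → ℕ} {x N : ℕ} (h0 : p 0 ≤ x)
    (hstep : ∀ j < N, p (j + 1) ≤ 2 ^ p j) : p N ≤ expIter N x := by
  induction N with
  | zero => exact h0
  | succ N ih =>
    calc p (N + 1) ≤ 2 ^ p N := hstep N N.lt_succ_self
      _ ≤ 2 ^ expIter N x :=
        Nat.pow_le_pow_right two_pos (ih fun j hj => hstep j (hj.trans N.lt_succ_self))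
      _ = expIter (N + 1) x := rfl

theorem mul_two_pow_le_two_pow_add (a b : ℕ) : a * 2 ^ b ≤ 2 ^ (a + b) := by
  rw [pow_add]
  exact Nat.mul_le_mul_right _ a.lt_two_pow_self.le

theorem add_mul_two_pow_le_two_pow {E y z : ℕ} (h : y + z ≤ E) : E + y * 2 ^ z ≤ 2 ^ E := by
  rcases Nat.eq_zero_or_pos y with rfl | hy
  · simpa using E.lt_two_pow_self.le
  have hE : E = (E - 1) + 1 := by omega
  have hyz : y * 2 ^ z ≤ 2 ^ (E - 1) :=
    calc y * 2 ^ z ≤ 2 ^ (y - 1) * 2 ^ z :=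
          Nat.mul_le_mul_right _ (by have := (y - 1).lt_two_pow_self; omega)
      _ = 2 ^ (y - 1 + z) := (pow_add _ _ _).symm
      _ ≤ 2 ^ (E - 1) := Nat.pow_le_pow_right two_pos (by omega)
  have hE' : E ≤ 2 ^ (E - 1) := by have := (E - 1).lt_two_pow_self; omega
  rw [hE, pow_succ]
  omega

theorem potential_le_two_pow {c A R a b : ℕ} (hR : R ≤ A) (hab : a ≤ b + R * 2 ^ (c * b)) :
    3 * (c * a + c * A) ≤ 2 ^ (3 * (c * b + c * A)) := by
  have hca : c * a ≤ c * b + c * A * 2 ^ (c * b) :=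
    calc c * a ≤ c * (b + R * 2 ^ (c * b)) := Nat.mul_le_mul_left c hab
      _ = c * b + c * R * 2 ^ (c * b) := by ring
      _ ≤ c * b + c * A * 2 ^ (c * b) := by gcongr
  calc 3 * (c * a + c * A) ≤ 3 * (c * b + c * A) + 3 * (c * A) * 2 ^ (c * b) := by
        rw [mul_assoc 3 (c * A)]; omega
    _ ≤ 2 ^ (3 * (c * b + c * A)) := add_mul_two_pow_le_two_pow (by omega)

/-- Size of the saturated automaton.  There is an absolute constant
`C` such that: if `m > 1` is the maximal rank of a symbol, and the sizes
`q k = |Q'_k|` of the state sets of the saturated automaton satisfy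
`|Q'_{n+1}| ≤ |Q| + |R|`, `|Q'_n| ≤ |Q'_{n+1}| + |R|`, and
`|Q'_k| ≤ |Q'_{k+1}| + |R|·2^((m−1)·|Q'_{k+1}|)` for `1 ≤ k ≤ n−1`, then the total
number of states `|Q'| = |Q'_1|` satisfies
`|Q'| ≤ expIter (n−1) (C·(m−1)·(|Q|+|R|))`, and the number of transitions `|Δ'|`,
being at most one exponential larger than the number of states, satisfies
`|Δ'| ≤ expIter n (C·(m−1)·(|Q|+|R|))`. -/
theorem saturation_size :
    ∃ C : ℕ, 0 < C ∧
      ∀ (n m Qc Rc : ℕ) (q : ℕ → ℕ),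
        1 < m → 1 ≤ n →
        q (n + 1) ≤ Qc + Rc →
        q n ≤ q (n + 1) + Rc →
        (∀ k, 1 ≤ k → k ≤ n - 1 → q k ≤ q (k + 1) + Rc * 2 ^ ((m - 1) * q (k + 1))) →
        q 1 ≤ expIter (n - 1) (C * ((m - 1) * (Qc + Rc))) ∧
        ∀ d : ℕ, d ≤ (Qc + Rc + q 1) * 2 ^ (m * q 1) →
          d ≤ expIter n (C * ((m - 1) * (Qc + Rc))) := by
  refine ⟨9, by norm_num, fun n m Qc Rc q hm hn htop hnext hrec => ?_⟩
  obtain ⟨N, rfl⟩ : ∃ N, n = N + 1 := ⟨n - 1, by omega⟩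
  simp only [Nat.add_sub_cancel] at hrec ⊢
  set B := (m - 1) * (Qc + Rc) with hB
  have hA : Qc + Rc ≤ B := Nat.le_mul_of_pos_left _ (by omega)
  have hp : 3 * ((m - 1) * q 1 + B) ≤ expIter N (9 * B) := by
    have hbase : (m - 1) * q (N + 1) ≤ 2 * B := by
      rw [hB, mul_left_comm]; exact Nat.mul_le_mul_left _ (by omega)
    have hstep : ∀ j < N, 3 * ((m - 1) * q (N + 1 - (j + 1)) + B) ≤
        2 ^ (3 * ((m - 1) * q (N + 1 - j) + B)) := by
      intro j hj
      have hk := hrec (N - j) (by omega) (by omega)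
      rw [show N - j + 1 = N + 1 - j by omega] at hk
      rw [show N + 1 - (j + 1) = N - j by omega]
      exact potential_le_two_pow (by omega) hk
    simpa using le_expIter_of_le_two_pow (p := fun j => 3 * ((m - 1) * q (N + 1 - j) + B))
      (x := 9 * B) (by simp only [Nat.sub_zero]; omega) hstep
  have hq : q 1 ≤ (m - 1) * q 1 := Nat.le_mul_of_pos_left _ (by omega)
  refine ⟨by omega, fun d hd => ?_⟩
  have hexp : Qc + Rc + q 1 + m * q 1 ≤ 3 * ((m - 1) * q 1 + B) := by
    have : m + 1 ≤ 3 * (m - 1) := by omega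
    nlinarith
  calc d ≤ (Qc + Rc + q 1) * 2 ^ (m * q 1) := hd
    _ ≤ 2 ^ (Qc + Rc + q 1 + m * q 1) := mul_two_pow_le_two_pow_add _ _
    _ ≤ 2 ^ expIter N (9 * B) := Nat.pow_le_pow_right two_pos (hexp.trans hp)
    _ = expIter (N + 1) (9 * B) := rfl

end OTPS
end

section
/- Correctness of the encoding of ordered multi-pushdown systems into AOTPSs: for the AOTPS S constructed from an ordered multi-pushdown system O = (n, Γ, Q, Δ), one has (p, w₁,…,w_n) →*_O P × {(w'₁,…,w'_n)} if and only if (p, enc(w₁,…,w_n)) →*_S P × {enc(w'₁,…,w'_n)}; hence the encoding preserves reachability properties. -/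
namespace OTPS

/-! ### Ordered multi-pushdown systems -/

/-- Operations of a multi-pushdown system: push or pop a symbol on the `k`-th
pushdown (pushdowns are indexed `1, …, n`). -/
inductive MPDOp (Γ : Type) : Type
  | push (k : ℕ) (a : Γ)
  | pop (k : ℕ) (a : Γ)

/-- An alternating ordered multi-pushdown system with `n` word pushdowns. -/
structure OMPDS (Γ Q : Type) where
  n : ℕ
  rules : Set (Q × MPDOp Γ × Set Q)

/-- Well-formedness: pushdown indices lie in `{1, …, n}`. -/
def OMPDS.WF {Γ Q : Type} (O : OMPDS Γ Q) : Prop :=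
  0 < O.n ∧ ∀ r ∈ O.rules,
    match r.2.1 with
    | .push k _ => 1 ≤ k ∧ k ≤ O.n
    | .pop k _ => 1 ≤ k ∧ k ≤ O.n

/-- The alternating transition relation of an ordered multi-pushdown system on
configurations `(p, w₁, …, w_n)`: pushes are unrestricted, while popping from the
`k`-th pushdown empties pushdowns `1, …, k−1`. -/
def OMPDS.trans {Γ Q : Type} (O : OMPDS Γ Q)
    (c : Q × List (List Γ)) (D : Set (Q × List (List Γ))) : Prop :=
  c.2.length = O.n ∧
  ∃ r ∈ O.rules, r.1 = c.1 ∧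
    ((∃ (k : ℕ) (a : Γ), r.2.1 = MPDOp.push k a ∧ 1 ≤ k ∧ k ≤ O.n ∧
        D = (fun q => (q, c.2.set (k - 1) (a :: c.2.getD (k - 1) []))) '' r.2.2) ∨
     (∃ (k : ℕ) (a : Γ) (w' : List Γ), r.2.1 = MPDOp.pop k a ∧ 1 ≤ k ∧ k ≤ O.n ∧
        c.2.getD (k - 1) [] = a :: w' ∧
        D = (fun q => (q, List.replicate (k - 1) ([] : List Γ) ++ w' :: c.2.drop k))
              '' r.2.2))

/-- A non-deterministic ordered multi-pushdown system. -/
def OMPDS.Nondet {Γ Q : Type} (O : OMPDS Γ Q) : Prop :=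
  ∀ r ∈ O.rules, ∃ q : Q, r.2.2 = {q}

end OTPS
namespace OTPS

/-! ### Encoding ordered multi-pushdown systems into AOTPSs -/

/-- The alphabet `Σ = (Γ⊥ × {1,…,n}) ∪ {•}`: a symbol `(a, i)` (with `a ∈ Γ` or
`a = ⊥`, represented by `none`) or the root symbol `•`. -/
abbrev MSym (Γ : Type) : Type := (Option Γ × ℕ) ⊕ Unit

/-- Ranks: `(a, i)` has rank `1` for `a ∈ Γ` and rank `0` for `⊥`; `•` has rank `n`.
Orders: `(a, i)` has order `i`; `•` has order `1`. -/
def msd (Γ : Type) (n : ℕ) : SymData (MSym Γ) where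
  rank := fun s => match s with
    | .inl (some _, _) => 1
    | .inl (none, _) => 0
    | .inr _ => n
  ord := fun s => match s with
    | .inl (_, i) => i
    | .inr _ => 1

/-- Terms over the alphabet `MSym Γ` with variables `ℕ` (`x_k` has order `k`). -/
def tvar {Γ : Type} (i : ℕ) : TTree (MSym Γ ⊕ ℕ) := .node (.inr i) []

def tsym {Γ : Type} (a : Option Γ) (k : ℕ) (ts : List (TTree (MSym Γ ⊕ ℕ))) :
    TTree (MSym Γ ⊕ ℕ) := .node (.inl (.inl (a, k))) ts

def tbullet {Γ : Type} (ts : List (TTree (MSym Γ ⊕ ℕ))) : TTree (MSym Γ ⊕ ℕ) :=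
  .node (.inl (.inr ())) ts

/-- The list of variables `x₁, …, x_n`. -/
def baseVars (Γ : Type) (n : ℕ) : List (TTree (MSym Γ ⊕ ℕ)) :=
  (List.range n).map (fun i => tvar (i + 1))

/-- The encoding of the `k`-th pushdown word as a linear tree of order `k`. -/
def encW {Γ : Type} (k : ℕ) : List Γ → TTree (MSym Γ)
  | [] => .node (.inl (none, k)) []
  | a :: w => .node (.inl (some a, k)) [encW k w]

/-- The encoding of a multi-pushdown `(w₁, …, w_n)` as the tree
`•(enc w₁, …, enc w_n)`. -/
def encMP {Γ : Type} (n : ℕ) (ws : List (List Γ)) : TTree (MSym Γ) :=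
  .node (.inr ()) ((List.range n).map (fun i => encW (i + 1) (ws.getD i [])))

/-- The shallow rule `p, •(x₁,…,x_n) → P, •(x₁,…,a^k(x_k),…,x_n)` encoding a push. -/
def pushRule {Γ Q : Type} (n : ℕ) (p : Q) (k : ℕ) (a : Γ) (P : Set Q) :
    ARule (MSym Γ) ℕ Q where
  p := p
  a := .inr ()
  args := baseVars Γ n
  look := none
  tgt := P
  rhs := tbullet ((baseVars Γ n).set (k - 1) (tsym (some a) k [tvar k]))

/-- The deep rule
`p, •(x₁,…,a^k(x_k),…,x_n) → P, •(⊥¹,…,⊥^{k−1},x_k,x_{k+1},…,x_n)` encoding a pop. -/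
def popRule {Γ Q : Type} (n : ℕ) (p : Q) (k : ℕ) (a : Γ) (P : Set Q) :
    ARule (MSym Γ) ℕ Q where
  p := p
  a := .inr ()
  args := (baseVars Γ n).set (k - 1) (tsym (some a) k [tvar k])
  look := some (k - 1)
  tgt := P
  rhs := tbullet ((List.range n).map
    (fun i => if i + 1 < k then tsym none (i + 1) [] else tvar (i + 1)))

/-- The AOTPS encoding an ordered multi-pushdown system. -/
def encodeMPDS {Γ Q : Type} (O : OMPDS Γ Q) : AOTPS (MSym Γ) ℕ Q where
  n := O.n
  sd := msd Γ O.n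
  ordv := id
  ctrl := Set.univ
  rules := {ru | ∃ r ∈ O.rules,
    (∃ (k : ℕ) (a : Γ), r.2.1 = MPDOp.push k a ∧ ru = pushRule O.n r.1 k a r.2.2) ∨
    (∃ (k : ℕ) (a : Γ), r.2.1 = MPDOp.pop k a ∧ ru = popRule O.n r.1 k a r.2.2)}

/-!
The map `(p, w₁, …, w_n) ↦ (p, enc(w₁, …, w_n))` is injective on configurations with `n`
pushdowns and matches single alternating transitions in both directions. A push or pop on the
`k`-th pushdown is simulated by the corresponding rule of `S` under the substitution
`x_j ↦ enc w_j`, except that for a pop `x_k` is sent to the encoding of `w_k` with its top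
letter removed. Conversely, matching the left-hand side of a rule against an encoded
configuration forces the substitution to have this form; here the bounds `1 ≤ k ≤ n` of a
well-formed system are needed, since rules with other indices give steps of `S` that `O` lacks.
A map with these properties transports `→*` in both directions, one `Step1` at a time.
-/

section Simulation

variable {C C' : Type} {tr : C → Set C → Prop} {tr' : C' → Set C' → Prop}

theorem Step1.image (f : C → C') (hf : ∀ c D, tr c D → tr' (f c) (f '' D))
    {A B : Set C} (h : Step1 tr A B) : Step1 tr' (f '' A) (f '' B) := by
  rintro _ ⟨c, hc, rfl⟩
  rcases h c hc with hB | ⟨D, hD, hDB⟩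
  · exact Or.inl (Set.mem_image_of_mem f hB)
  · exact Or.inr ⟨f '' D, hf c D hD, Set.image_mono hDB⟩

theorem Step1.preimage_inter (f : C → C') {I : Set C} (hI : ∀ c D, tr c D → D ⊆ I)
    (hf : ∀ c ∈ I, ∀ E, tr' (f c) E → ∃ D, tr c D ∧ E = f '' D)
    {A B : Set C'} (h : Step1 tr' A B) : Step1 tr (f ⁻¹' A ∩ I) (f ⁻¹' B ∩ I) := by
  rintro c ⟨hA, hc⟩
  rcases h (f c) hA with hB | ⟨E, hE, hEB⟩
  · exact Or.inl ⟨hB, hc⟩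
  · obtain ⟨D, hD, rfl⟩ := hf c hc E hE
    exact Or.inr ⟨D, hD, fun d hd => ⟨hEB (Set.mem_image_of_mem f hd), hI c D hD hd⟩⟩

theorem reflTransGen_step1_image_iff (f : C → C') {I : Set C} (hinj : I.InjOn f)
    (hI : ∀ c D, tr c D → D ⊆ I) (hfwd : ∀ c D, tr c D → tr' (f c) (f '' D))
    (hbwd : ∀ c ∈ I, ∀ E, tr' (f c) E → ∃ D, tr c D ∧ E = f '' D)
    {A T : Set C} (hA : A ⊆ I) (hT : T ⊆ I) :
    Relation.ReflTransGen (Step1 tr) A T ↔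
      Relation.ReflTransGen (Step1 tr') (f '' A) (f '' T) := by
  refine ⟨Relation.ReflTransGen.lift (f '' ·) (fun _ _ => Step1.image f hfwd) A T, fun h => ?_⟩
  have h' := Relation.ReflTransGen.lift (fun B => f ⁻¹' B ∩ I)
    (fun _ _ => Step1.preimage_inter f hI hbwd) _ _ h
  dsimp only [Function.onFun] at h'
  rwa [hinj.preimage_image_inter hA, hinj.preimage_image_inter hT] at h'

end Simulation

theorem substG_inl {α ν : Type} (σ : ν → TTree α) (a : α) (ts : List (TTree (α ⊕ ν))) :
    substG σ (.node (.inl a) ts) = .node a (ts.map (substG σ)) := by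
  rw [substG, List.attach_map_val]

theorem substG_inr {α ν : Type} (σ : ν → TTree α) (x : ν) (ts : List (TTree (α ⊕ ν))) :
    substG σ (.node (.inr x) ts) = σ x := by
  rw [substG]

section Encoding

variable {Γ Q : Type}

theorem encW_root_ord (n k : ℕ) (w : List Γ) : (msd Γ n).ord (encW k w).root = k := by
  cases w <;> rfl

theorem encW_injective (k : ℕ) : Function.Injective (encW (Γ := Γ) k) := by
  intro w
  induction w with
  | nil => rintro (_ | _) h <;> simp_all [encW]
  | cons a w ih =>
    rintro (_ | ⟨b, w'⟩) h
    · simp [encW] at h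
    · obtain ⟨rfl, hw⟩ : a = b ∧ encW k w = encW k w' := by simpa [encW] using h
      rw [ih hw]

theorem encW_eq_node_some_iff {k : ℕ} {w : List Γ} {a : Γ} {t : TTree (MSym Γ)} :
    encW k w = .node (.inl (some a, k)) [t] ↔ ∃ w', w = a :: w' ∧ t = encW k w' := by
  cases w <;> simp [encW, eq_comm]

theorem node_map_range_eq_encMP_iff {n : ℕ} {ws : List (List Γ)} {g : ℕ → TTree (MSym Γ)} :
    TTree.node (.inr ()) ((List.range n).map g) = encMP n ws ↔
      ∀ i < n, g i = encW (i + 1) (ws.getD i []) := by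
  simp [encMP, List.map_inj_left]

theorem encMP_injOn (n : ℕ) : {ws : List (List Γ) | ws.length = n}.InjOn (encMP n) := by
  intro ws hws ws' hws' h
  have hi := node_map_range_eq_encMP_iff.mp h.symm
  refine List.ext_getElem (hws.trans hws'.symm) fun i h₁ h₂ => ?_
  have := encW_injective _ (hi i (hws ▸ h₁))
  rwa [List.getD_eq_getElem _ _ h₁, List.getD_eq_getElem _ _ h₂, eq_comm] at this

theorem substG_pushRule_lhs (σ : ℕ → TTree (MSym Γ)) (n : ℕ) (p : Q) (k : ℕ) (a : Γ)
    (P : Set Q) :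
    substG σ (pushRule n p k a P).lhs =
      .node (.inr ()) ((List.range n).map fun i => σ (i + 1)) := by
  simp [pushRule, ARule.lhs, baseVars, tvar, substG_inl, substG_inr]

theorem substG_pushRule_rhs (σ : ℕ → TTree (MSym Γ)) (n : ℕ) (p : Q) (k : ℕ) (a : Γ)
    (P : Set Q) :
    substG σ (pushRule n p k a P).rhs = .node (.inr ()) ((List.range n).map fun i =>
      if i = k - 1 then .node (.inl (some a, k)) [σ k] else σ (i + 1)) := by
  simp only [pushRule, tbullet, substG_inl, List.map_set, baseVars, tsym, tvar]
  congr 1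
  refine List.ext_getElem (by simp) fun i _ _ => ?_
  by_cases hi : i = k - 1 <;> simp [hi, eq_comm, substG_inr]

theorem popRule_lhs (n : ℕ) (p : Q) (k : ℕ) (a : Γ) (P : Set Q) :
    (popRule n p k a P).lhs = (pushRule n p k a P).rhs :=
  rfl

theorem substG_popRule_rhs (σ : ℕ → TTree (MSym Γ)) (n : ℕ) (p : Q) (k : ℕ) (a : Γ)
    (P : Set Q) :
    substG σ (popRule n p k a P).rhs = .node (.inr ()) ((List.range n).map fun i =>
      if i + 1 < k then .node (.inl (none, i + 1)) [] else σ (i + 1)) := by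
  simp only [popRule, tbullet, substG_inl, List.map_map]
  congr 1
  refine List.map_congr_left fun i _ => ?_
  by_cases h : i + 1 < k <;> simp [h, tsym, tvar, substG_inl, substG_inr]

theorem getD_set_eq_ite {α : Type} (l : List α) {j : ℕ} (hj : j < l.length) (x d : α)
    (i : ℕ) :
    (l.set j x).getD i d = if i = j then x else l.getD i d := by
  split_ifs with h <;> simp [List.getD_eq_getElem?_getD, h, hj, Ne.symm]

theorem getD_replicate_append_cons_drop {α : Type} (l : List (List α)) {k : ℕ} (hk : 1 ≤ k)
    (hkl : k ≤ l.length) (w : List α) (i : ℕ) :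
    (List.replicate (k - 1) [] ++ w :: l.drop k).getD i [] =
      if i + 1 < k then [] else (l.set (k - 1) w).getD i [] := by
  rw [getD_set_eq_ite l (by omega)]
  rcases lt_trichotomy (i + 1) k with h | h | h
  · rw [List.getD_append _ _ _ _ (by simp; omega), if_pos h]
    simp [List.getD_eq_getElem?_getD, show i < k - 1 by omega]
  · rw [List.getD_append_right _ _ _ _ (by simp; omega)]
    simp [h.symm]
  · rw [List.getD_append_right _ _ _ _ (by simp; omega)]
    simp [show ¬ i + 1 < k by omega, show i ≠ k - 1 by omega,
      show i - (k - 1) = i - k + 1 by omega, show k + (i - k) = i by omega]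

variable {σ : ℕ → TTree (MSym Γ)} {n k : ℕ} {p : Q} {a : Γ} {P : Set Q}
  {ws : List (List Γ)}

theorem substG_pushRule_lhs_eq_encMP_iff :
    substG σ (pushRule n p k a P).lhs = encMP n ws ↔
      ∀ i < n, σ (i + 1) = encW (i + 1) (ws.getD i []) := by
  rw [substG_pushRule_lhs, node_map_range_eq_encMP_iff]

theorem substG_pushRule_rhs_eq_encMP (hk : 1 ≤ k) (hkn : k ≤ n) (hlen : ws.length = n)
    (hσ : ∀ i < n, σ (i + 1) = encW (i + 1) (ws.getD i [])) :
    substG σ (pushRule n p k a P).rhs = encMP n (ws.set (k - 1) (a :: ws.getD (k - 1) [])) := by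
  rw [substG_pushRule_rhs, node_map_range_eq_encMP_iff]
  intro i hi
  rw [getD_set_eq_ite ws (by omega)]
  split_ifs with hik
  · have hσk := hσ (k - 1) (by omega)
    rw [Nat.sub_add_cancel hk] at hσk
    rw [hik, Nat.sub_add_cancel hk, encW, hσk]
  · exact hσ i hi

theorem substG_popRule_lhs_eq_encMP_iff (hk : 1 ≤ k) (hkn : k ≤ n) (hlen : ws.length = n) :
    substG σ (popRule n p k a P).lhs = encMP n ws ↔
      ∃ w', ws.getD (k - 1) [] = a :: w' ∧
        ∀ i < n, σ (i + 1) = encW (i + 1) ((ws.set (k - 1) w').getD i []) := by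
  rw [popRule_lhs, substG_pushRule_rhs, node_map_range_eq_encMP_iff]
  have hset : ∀ w' i, (ws.set (k - 1) w').getD i [] = if i = k - 1 then w' else ws.getD i [] :=
    fun w' => getD_set_eq_ite ws (by omega) w' []
  constructor
  · intro h
    have hk' := h (k - 1) (by omega)
    rw [if_pos rfl, Nat.sub_add_cancel hk, eq_comm, encW_eq_node_some_iff] at hk'
    obtain ⟨w', hw', hσk⟩ := hk'
    refine ⟨w', hw', fun i hi => ?_⟩
    rw [hset]
    split_ifs with hik
    · rw [hik, Nat.sub_add_cancel hk, hσk]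
    · simpa [hik] using h i hi
  · rintro ⟨w', hw', hσ⟩ i hi
    split_ifs with hik
    · have hσk := hσ (k - 1) (by omega)
      rw [Nat.sub_add_cancel hk, hset, if_pos rfl] at hσk
      rw [hik, Nat.sub_add_cancel hk, hw', encW, hσk]
    · rw [hσ i hi, hset, if_neg hik]

theorem substG_popRule_rhs_eq_encMP {w' : List Γ} (hk : 1 ≤ k) (hkn : k ≤ n)
    (hlen : ws.length = n)
    (hσ : ∀ i < n, σ (i + 1) = encW (i + 1) ((ws.set (k - 1) w').getD i [])) :
    substG σ (popRule n p k a P).rhs = encMP n (List.replicate (k - 1) [] ++ w' :: ws.drop k) := by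
  rw [substG_popRule_rhs, node_map_range_eq_encMP_iff]
  intro i hi
  rw [getD_replicate_append_cons_drop ws hk (by omega)]
  split_ifs
  · rfl
  · exact hσ i hi

end Encoding

section Transitions

variable {Γ Q : Type} {O : OMPDS Γ Q}

def encConf (n : ℕ) (c : Q × List (List Γ)) : Q × TTree (MSym Γ) :=
  (c.1, encMP n c.2)

theorem encConf_injOn (n : ℕ) :
    {c : Q × List (List Γ) | c.2.length = n}.InjOn (encConf n) := by
  intro c hc d hd h
  obtain ⟨h₁, h₂⟩ := Prod.ext_iff.mp h
  exact Prod.ext h₁ (encMP_injOn n hc hd h₂)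

def encSubst (ws : List (List Γ)) (j : ℕ) : TTree (MSym Γ) :=
  encW j (ws.getD (j - 1) [])

theorem OMPDS.WF.index_bounds (hO : O.WF) {r : Q × MPDOp Γ × Set Q} (hr : r ∈ O.rules)
    {k : ℕ} {a : Γ} (hop : r.2.1 = .push k a ∨ r.2.1 = .pop k a) : 1 ≤ k ∧ k ≤ O.n := by
  have h := hO.2 r hr
  rcases hop with hop | hop <;> rw [hop] at h <;> exact h

theorem OMPDS.length_of_trans {c : Q × List (List Γ)} {D : Set (Q × List (List Γ))}
    (h : O.trans c D) : ∀ d ∈ D, d.2.length = O.n := by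
  obtain ⟨hlen, -, -, -, ⟨k, a, -, -, -, rfl⟩ | ⟨k, a, w', -, hk, hkn, -, rfl⟩⟩ := h
  · rintro _ ⟨q, -, rfl⟩
    simpa using hlen
  · rintro _ ⟨q, -, rfl⟩
    simp only [List.length_append, List.length_replicate, List.length_cons, List.length_drop]
    omega

theorem encodeMPDS_trans_of_trans {c : Q × List (List Γ)} {D : Set (Q × List (List Γ))}
    (h : O.trans c D) : (encodeMPDS O).trans (encConf O.n c) (encConf O.n '' D) := by
  obtain ⟨hlen, r, hr, hp,
    ⟨k, a, hop, hk, hkn, rfl⟩ | ⟨k, a, w', hop, hk, hkn, hw', rfl⟩⟩ := h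
  · refine ⟨pushRule O.n r.1 k a r.2.2, ⟨r, hr, .inl ⟨k, a, hop, rfl⟩⟩, encSubst c.2,
      fun x _ => encW_root_ord _ _ _, ?_, ?_⟩
    · rw [substG_pushRule_lhs_eq_encMP_iff.mpr fun i _ => rfl]
      exact Prod.ext hp.symm rfl
    · rw [Set.image_image, substG_pushRule_rhs_eq_encMP hk hkn hlen fun i _ => rfl]
      rfl
  · refine ⟨popRule O.n r.1 k a r.2.2, ⟨r, hr, .inr ⟨k, a, hop, rfl⟩⟩,
      encSubst (c.2.set (k - 1) w'), fun x _ => encW_root_ord _ _ _, ?_, ?_⟩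
    · rw [(substG_popRule_lhs_eq_encMP_iff hk hkn hlen).mpr ⟨w', hw', fun i _ => rfl⟩]
      exact Prod.ext hp.symm rfl
    · rw [Set.image_image, substG_popRule_rhs_eq_encMP hk hkn hlen fun i _ => rfl]
      rfl

theorem OMPDS.trans_of_encodeMPDS_trans (hO : O.WF) {c : Q × List (List Γ)}
    {E : Set (Q × TTree (MSym Γ))} (hlen : c.2.length = O.n)
    (h : (encodeMPDS O).trans (encConf O.n c) E) : ∃ D, O.trans c D ∧ E = encConf O.n '' D := by
  obtain ⟨ru, ⟨r, hr, ⟨k, a, hop, rfl⟩ | ⟨k, a, hop, rfl⟩⟩, σ, -, hc, rfl⟩ := h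
  · obtain ⟨hk, hkn⟩ := hO.index_bounds hr (.inl hop)
    obtain ⟨hp, hσ⟩ := Prod.ext_iff.mp hc
    refine ⟨_, ⟨hlen, r, hr, hp.symm, .inl ⟨k, a, hop, hk, hkn, rfl⟩⟩, ?_⟩
    rw [Set.image_image,
      substG_pushRule_rhs_eq_encMP hk hkn hlen (substG_pushRule_lhs_eq_encMP_iff.mp hσ.symm)]
    rfl
  · obtain ⟨hk, hkn⟩ := hO.index_bounds hr (.inr hop)
    obtain ⟨hp, hσ⟩ := Prod.ext_iff.mp hc
    obtain ⟨w', hw', hσ'⟩ := (substG_popRule_lhs_eq_encMP_iff hk hkn hlen).mp hσ.symm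
    refine ⟨_, ⟨hlen, r, hr, hp.symm, .inr ⟨k, a, w', hop, hk, hkn, hw', rfl⟩⟩, ?_⟩
    rw [Set.image_image, substG_popRule_rhs_eq_encMP hk hkn hlen hσ']
    rfl

end Transitions

/-- Correctness of the encoding of ordered multi-pushdown systems
into AOTPSs: `(p, w₁,…,w_n) →*_O P × {(w'₁,…,w'_n)}` iff
`(p, enc(w₁,…,w_n)) →*_S P × {enc(w'₁,…,w'_n)}`; hence the encoding preserves
reachability properties. -/
theorem encodeMPDS_correct {Γ Q : Type} (O : OMPDS Γ Q) (hO : O.WF)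
    (p : Q) (ws ws' : List (List Γ)) (P' : Set Q)
    (hws : ws.length = O.n) (hws' : ws'.length = O.n) :
    Relation.ReflTransGen (Step1 O.trans)
        {(p, ws)} ((fun q => (q, ws')) '' P') ↔
      Relation.ReflTransGen (Step1 (encodeMPDS O).trans)
        {(p, encMP O.n ws)} ((fun q => (q, encMP O.n ws')) '' P') := by
  have key := reflTransGen_step1_image_iff (encConf O.n) (encConf_injOn O.n)
    (fun _ _ h => O.length_of_trans h) (fun _ _ => encodeMPDS_trans_of_trans)
    (fun _ hc _ => O.trans_of_encodeMPDS_trans hO hc)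
    (A := {(p, ws)}) (T := (fun q => (q, ws')) '' P')
    (Set.singleton_subset_iff.mpr hws) (by rintro _ ⟨q, -, rfl⟩; exact hws')
  rwa [Set.image_singleton, Set.image_image] at key

end OTPS
end
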